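/- Observational congruence ≃ is a congruence with respect to the choice operator of the basic prioritized calculus: if P ≃ Q then P + R ≃ Q + R for all processes R. -/

import Mathlib

namespace PrioCalc

inductive Act where
  | tau : Act
  | vis : ℕ → Act
  | delta : Act
deriving DecidableEq

inductive Expr where
  | nil : Expr
  | var : ℕ → Expr
  | pre : Act → Expr → Expr
  | sum : Expr → Expr → Expr
  | recur : ℕ → Expr → Expr
  | pri : Expr → Expr
deriving DecidableEq

/-- Syntactic substitution of `F` for the free occurrences of variable `x`. -/
def subst : Expr → ℕ → Expr → Expr
  | .nil, _, _ => .nil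
  | .var m, x, F => if m = x then F else .var m
  | .pre γ E, x, F => .pre γ (subst E x F)
  | .sum E G, x, F => .sum (subst E x F) (subst G x F)
  | .recur y E, x, F => if y = x then .recur y E else .recur y (subst E x F)
  | .pri E, x, F => .pri (subst E x F)

/-- `free E x` : `x` occurs free in `E`. -/
def free : Expr → ℕ → Prop
  | .nil, _ => False
  | .var m, x => m = x
  | .pre _ E, x => free E x
  | .sum E G, x => free E x ∨ free G x
  | .recur y E, x => x ≠ y ∧ free E x
  | .pri E, x => free E x

def Closed (E : Expr) : Prop := ∀ x, ¬ free E x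

/-- Standard (non-δ) transitions; these never depend on δ-transitions. -/
inductive StepStd : Expr → Act → Expr → Prop where
  | pre {α : Act} (h : α ≠ Act.delta) (E : Expr) : StepStd (.pre α E) α E
  | sumL {P α P'} (Q : Expr) : StepStd P α P' → StepStd (.sum P Q) α P'
  | sumR {Q α Q'} (P : Expr) : StepStd Q α Q' → StepStd (.sum P Q) α Q'
  | unf {x E γ P'} : StepStd (subst E x (.recur x E)) γ P' → StepStd (.recur x E) γ P'
  | pri {P α P'} : StepStd P α P' → StepStd (.pri P) α P'

def CanTau (P : Expr) : Prop := ∃ P', StepStd P Act.tau P'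

/-- δ-transitions (stratified: the negative premise refers to standard transitions). -/
inductive StepDel : Expr → Expr → Prop where
  | pre (E : Expr) : StepDel (.pre Act.delta E) E
  | sumL {P P'} (Q : Expr) : StepDel P P' → ¬ CanTau Q → StepDel (.sum P Q) P'
  | sumR {Q Q'} (P : Expr) : StepDel Q Q' → ¬ CanTau P → StepDel (.sum P Q) Q'
  | unf {x E P'} : StepDel (subst E x (.recur x E)) P' → StepDel (.recur x E) P'

/-- The full (prioritized) transition relation. -/
def Step (P : Expr) (γ : Act) (Q : Expr) : Prop :=
  if γ = Act.delta then StepDel P Q else StepStd P γ Q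

def TauStar : Expr → Expr → Prop :=
  Relation.ReflTransGen (fun P Q => Step P Act.tau Q)

/-- Weak transition `==γ==>` : τ* γ τ* (at least one γ step). -/
def Weak (P : Expr) (γ : Act) (Q : Expr) : Prop :=
  ∃ P₁ P₂, TauStar P P₁ ∧ Step P₁ γ P₂ ∧ TauStar P₂ Q

/-- Weak transition `==γ̂==>`. -/
def WeakHat (P : Expr) (γ : Act) (Q : Expr) : Prop :=
  if γ = Act.tau then TauStar P Q else Weak P γ Q

def IsWeakBisim (β : Expr → Expr → Prop) : Prop :=
  ∀ P Q, β P Q →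
    (∀ γ P', Step P γ P' → ∃ Q', WeakHat Q γ Q' ∧ β P' Q') ∧
    (∀ γ Q', Step Q γ Q' → ∃ P', WeakHat P γ P' ∧ β P' Q')

/-- Weak bisimilarity `≈`. -/
def WBisim (P Q : Expr) : Prop := ∃ β, IsWeakBisim β ∧ β P Q

/-- Observational congruence `≃`. -/
def ObsCong (P Q : Expr) : Prop :=
  (∀ γ P', Step P γ P' → ∃ Q', Weak Q γ Q' ∧ WBisim P' Q') ∧
  (∀ γ Q', Step Q γ Q' → ∃ P', Weak P γ P' ∧ WBisim P' Q')

/-- Terms of the basic calculus (no occurrence of the auxiliary `pri` operator). -/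
def PriFree : Expr → Prop
  | .nil => True
  | .var _ => True
  | .pre _ E => PriFree E
  | .sum E F => PriFree E ∧ PriFree F
  | .recur _ E => PriFree E
  | .pri _ => False

/-- Every free occurrence of `x` in `E` is (strongly) guarded. -/
def GVar : Expr → ℕ → Prop
  | .nil, _ => True
  | .var m, x => m ≠ x
  | .pre γ E, x => γ = Act.tau → GVar E x
  | .sum E F, x => GVar E x ∧ GVar F x
  | .recur y E, x => y ≠ x → GVar E x
  | .pri E, x => GVar E x

/-- `E` is (strongly) guarded: every recursion subterm is guarded. -/
def Guarded : Expr → Prop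
  | .nil => True
  | .var _ => True
  | .pre _ E => Guarded E
  | .sum E F => Guarded E ∧ Guarded F
  | .recur y E => GVar E y ∧ Guarded E
  | .pri E => Guarded E

/-- Some free occurrence of `x` in `E` is unguarded (not under a non-τ prefix). -/
def UnguardedVar : Expr → ℕ → Prop
  | .nil, _ => False
  | .var m, x => m = x
  | .pre γ E, x => γ = Act.tau ∧ UnguardedVar E x
  | .sum E F, x => UnguardedVar E x ∨ UnguardedVar F x
  | .recur y E, x => y ≠ x ∧ UnguardedVar E x
  | .pri E, x => UnguardedVar E x

/-- `x` is serial in `E` : every subexpression containing `x` free, apart from `x`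
itself, is a prefix, a sum or a recursion. -/
def SerialVar : Expr → ℕ → Prop
  | .nil, _ => True
  | .var _, _ => True
  | .pre _ E, x => SerialVar E x
  | .sum E F, x => SerialVar E x ∧ SerialVar F x
  | .recur y E, x => y = x ∨ SerialVar E x
  | .pri E, x => ¬ free E x

/-- Simultaneous substitution of closed terms for free variables. -/
def msubst : Expr → (ℕ → Expr) → Expr
  | .nil, _ => .nil
  | .var m, σ => σ m
  | .pre γ E, σ => .pre γ (msubst E σ)
  | .sum E F, σ => .sum (msubst E σ) (msubst F σ)
  | .recur y E, σ => .recur y (msubst E (Function.update σ y (.var y)))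
  | .pri E, σ => .pri (msubst E σ)

/-- Observational congruence on open terms (via closed substitutions). -/
def ObsCongO (E F : Expr) : Prop :=
  ∀ σ : ℕ → Expr, (∀ n, Closed (σ n)) → ObsCong (msubst E σ) (msubst F σ)

/-- The axiom system 𝒜. -/
inductive Prov : Expr → Expr → Prop where
  | refl (E) : Prov E E
  | symm {E F} : Prov E F → Prov F E
  | trans {E F G} : Prov E F → Prov F G → Prov E G
  | congPre (γ) {E F} : Prov E F → Prov (.pre γ E) (.pre γ F)
  | congSum {E E' F F'} : Prov E E' → Prov F F' → Prov (.sum E F) (.sum E' F')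
  | congRec (x) {E F} : Prov E F → Prov (.recur x E) (.recur x F)
  | congPri {E F} : Prov E F → Prov (.pri E) (.pri F)
  | a1 (E F) : Prov (.sum E F) (.sum F E)
  | a2 (E F G) : Prov (.sum (.sum E F) G) (.sum E (.sum F G))
  | a3 (E) : Prov (.sum E E) E
  | a4 (E) : Prov (.sum E .nil) E
  | tau1 (γ E) : Prov (.pre γ (.pre Act.tau E)) (.pre γ E)
  | tau2 (E) : Prov (.sum E (.pre Act.tau E)) (.pre Act.tau E)
  | tau3 (γ E F) :
      Prov (.sum (.pre γ (.sum E (.pre Act.tau F))) (.pre γ F))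
           (.pre γ (.sum E (.pre Act.tau F)))
  | pri1 : Prov (.pri .nil) .nil
  | pri2 {α} (h : α ≠ Act.delta) (E) : Prov (.pri (.pre α E)) (.pre α E)
  | pri3 (E) : Prov (.pri (.pre Act.delta E)) .nil
  | pri4 (E F) : Prov (.pri (.sum E F)) (.sum (.pri E) (.pri F))
  | pri5 (E) : Prov (.pri (.pri E)) (.pri E)
  | pri6 (E F) : Prov (.sum (.pre Act.tau E) F) (.sum (.pre Act.tau E) (.pri F))
  | rec1 (x E) : Prov (.recur x E) (subst E x (.recur x E))
  | rec2 {x E F} (hs : SerialVar E x) (hg : GVar E x) :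
      Prov F (subst E x F) → Prov F (.recur x E)
  | ung1 (x E) : Prov (.recur x (.sum (.var x) E)) (.recur x E)
  | ung2 (x E) :
      Prov (.recur x (.sum (.pre Act.tau (.var x)) E)) (.recur x (.pre Act.tau (.pri E)))
  | ung3 (x E F) :
      Prov (.recur x (.sum (.pre Act.tau (.sum (.var x) E)) F))
           (.recur x (.sum (.sum (.pre Act.tau (.var x)) E) F))
  | ung4 (x E F) :
      Prov (.recur x (.sum (.pre Act.tau (.sum (.pri (.var x)) E)) F))
           (.recur x (.sum (.sum (.pre Act.tau (.var x)) E) F))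

/-- Standard equation sets: formal variables are `X i = var i` for `i < n`,
free variables are variables `≥ n`. -/
structure StdEqSet (n : ℕ) where
  pres : Fin n → List (Act × Fin n)
  frees : Fin n → List ℕ
  frees_ge : ∀ i, ∀ w ∈ frees i, n ≤ w

/-- The body `H_i{Ẽ/X̃}` of the `i`-th equation with expressions `Es` for the
formal variables. -/
def instBody {n : ℕ} (S : StdEqSet n) (Es : Fin n → Expr) (i : Fin n) : Expr :=
  (S.pres i).foldr (fun p acc => Expr.sum (Expr.pre p.1 (Es p.2)) acc)
    ((S.frees i).foldr (fun w acc => Expr.sum (Expr.var w) acc) Expr.nil)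

/-- `E` provably satisfies `S` (distinguished variable `X 0`). -/
def ProvSat {n : ℕ} (hn : 0 < n) (E : Expr) (S : StdEqSet n) : Prop :=
  ∃ Es : Fin n → Expr, Es ⟨0, hn⟩ = E ∧
    (∀ i x, free (Es i) x → n ≤ x) ∧
    (∀ i, Prov (Es i) (instBody S Es i))

/-- No equation contains both a τ-prefixed and a δ-prefixed summand. -/
def Prioritized {n : ℕ} (S : StdEqSet n) : Prop :=
  ∀ i, (∃ j, (Act.tau, j) ∈ S.pres i) → ∀ j, (Act.delta, j) ∉ S.pres i

/-- No cycle of unguarded (i.e. τ-prefixed) dependencies. -/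
def EqGuarded {n : ℕ} (S : StdEqSet n) : Prop :=
  ∀ i : Fin n, ¬ Relation.TransGen (fun i j : Fin n => (Act.tau, j) ∈ S.pres i) i i

/-- Delete every δ-prefixed summand from equations that also contain a
τ-prefixed summand. -/
def prioritize {n : ℕ} (S : StdEqSet n) : StdEqSet n where
  pres i := if (S.pres i).any (fun p => decide (p.1 = Act.tau))
            then (S.pres i).filter (fun p => decide (p.1 ≠ Act.delta))
            else S.pres i
  frees := S.frees
  frees_ge := S.frees_ge

/-! A move of `P + R` is a move of `P` or of `R`. A move of `R` is copied by `Q + R`; a move of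
`P` is matched, via `P ≃ Q`, by a weak move of `Q` that can be started inside `Q + R` because it
consists of at least one step. Priority only constrains δ-moves. A δ-move of `P` inside `P + R`
requires `R` to be τ-stable, which is exactly what the matching weak δ-move of `Q` needs if it
starts with δ. A δ-move of `R` requires `P` to be τ-stable, which transfers to `Q` because every
τ-move of `Q` is matched by a nonempty τ-sequence of `P`. -/

section Step

variable {P P' R : Expr} {γ : Act}

theorem step_delta_iff : Step P .delta P' ↔ StepDel P P' := by
  simp [Step]

theorem step_iff_of_ne_delta (hγ : γ ≠ .delta) : Step P γ P' ↔ StepStd P γ P' := by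
  simp [Step, hγ]

theorem step_tau_iff : Step P .tau P' ↔ StepStd P .tau P' :=
  step_iff_of_ne_delta nofun

theorem Step.sum_left (h : Step P γ P') (hR : γ = .delta → ¬ CanTau R) :
    Step (.sum P R) γ P' := by
  by_cases hγ : γ = .delta
  · subst hγ
    exact step_delta_iff.2 (.sumL R (step_delta_iff.1 h) (hR rfl))
  · exact (step_iff_of_ne_delta hγ).2 (.sumL R ((step_iff_of_ne_delta hγ).1 h))

theorem Step.sum_right (h : Step R γ P') (hP : γ = .delta → ¬ CanTau P) :
    Step (.sum P R) γ P' := by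
  by_cases hγ : γ = .delta
  · subst hγ
    exact step_delta_iff.2 (.sumR P (step_delta_iff.1 h) (hP rfl))
  · exact (step_iff_of_ne_delta hγ).2 (.sumR P ((step_iff_of_ne_delta hγ).1 h))

theorem Step.of_sum (h : Step (.sum P R) γ P') :
    (Step P γ P' ∧ (γ = .delta → ¬ CanTau R)) ∨
      (Step R γ P' ∧ (γ = .delta → ¬ CanTau P)) := by
  by_cases hγ : γ = .delta
  · subst hγ
    rcases step_delta_iff.1 h with _ | ⟨_, hP', hR⟩ | ⟨_, hR', hP⟩
    · exact .inl ⟨step_delta_iff.2 hP', fun _ => hR⟩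
    · exact .inr ⟨step_delta_iff.2 hR', fun _ => hP⟩
  · rcases (step_iff_of_ne_delta hγ).1 h with _ | ⟨_, hP'⟩ | ⟨_, hR'⟩
    · exact .inl ⟨(step_iff_of_ne_delta hγ).2 hP', (absurd · hγ)⟩
    · exact .inr ⟨(step_iff_of_ne_delta hγ).2 hR', (absurd · hγ)⟩

theorem Step.weak (h : Step P γ P') : Weak P γ P' :=
  ⟨P, P', .refl, h, .refl⟩

theorem Step.weakHat (h : Step P γ P') : WeakHat P γ P' := by
  unfold WeakHat
  split_ifs with hγ
  · subst hγ
    exact .single h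
  · exact h.weak

end Step

theorem WBisim.refl (P : Expr) : WBisim P P :=
  ⟨Eq, fun _ _ hPQ => hPQ ▸ ⟨fun _ P' h => ⟨P', h.weakHat, rfl⟩,
    fun _ Q' h => ⟨Q', h.weakHat, rfl⟩⟩, rfl⟩

theorem Weak.sum_left {Q Q' R : Expr} {γ : Act} (h : Weak Q γ Q')
    (hR : γ = .delta → ¬ CanTau R) : Weak (.sum Q R) γ Q' := by
  obtain ⟨Q₁, Q₂, hQQ₁, hQ₁Q₂, hQ₂Q'⟩ := h
  rcases hQQ₁.cases_head with rfl | ⟨Q₀, hQQ₀, hQ₀Q₁⟩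
  · exact ⟨_, Q₂, .refl, hQ₁Q₂.sum_left hR, hQ₂Q'⟩
  · exact ⟨Q₁, Q₂, .head (hQQ₀.sum_left nofun) hQ₀Q₁, hQ₁Q₂, hQ₂Q'⟩

theorem Weak.canTau {P P' : Expr} (h : Weak P .tau P') : CanTau P := by
  obtain ⟨P₁, P₂, hPP₁, hP₁P₂, -⟩ := h
  rcases hPP₁.cases_head with rfl | ⟨P₀, hPP₀, -⟩
  · exact ⟨P₂, step_tau_iff.1 hP₁P₂⟩
  · exact ⟨P₀, step_tau_iff.1 hPP₀⟩

theorem CanTau.of_weak_simulation {P Q : Expr} {B : Expr → Expr → Prop}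
    (hsim : ∀ γ Q', Step Q γ Q' → ∃ P', Weak P γ P' ∧ B Q' P') (hQ : CanTau Q) :
    CanTau P := by
  obtain ⟨Q', hQQ'⟩ := hQ
  obtain ⟨P', hPP', -⟩ := hsim .tau Q' (step_tau_iff.2 hQQ')
  exact hPP'.canTau

/-- Stated for an arbitrary reflexive `B` so that it gives both halves of `≃`, with `B = WBisim`
and with its converse. -/
theorem sum_weak_simulation {P Q R : Expr} {B : Expr → Expr → Prop} (hB : ∀ S, B S S)
    (hsim : ∀ γ P', Step P γ P' → ∃ Q', Weak Q γ Q' ∧ B P' Q')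
    (hτ : CanTau Q → CanTau P) :
    ∀ γ S', Step (.sum P R) γ S' → ∃ T', Weak (.sum Q R) γ T' ∧ B S' T' := by
  intro γ S' hstep
  rcases hstep.of_sum with ⟨hP, hR⟩ | ⟨hR, hP⟩
  · obtain ⟨Q', hQQ', hB'⟩ := hsim γ S' hP
    exact ⟨Q', hQQ'.sum_left hR, hB'⟩
  · exact ⟨S', (hR.sum_right fun hδ => mt hτ (hP hδ)).weak, hB S'⟩

theorem obscong_sum_congruence_general (P Q R : Expr)
    (h : ObsCong P Q) :
    ObsCong (.sum P R) (.sum Q R) :=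
  ⟨sum_weak_simulation WBisim.refl h.1 (CanTau.of_weak_simulation (B := flip WBisim) h.2),
    sum_weak_simulation (B := flip WBisim) WBisim.refl h.2 (CanTau.of_weak_simulation h.1)⟩

/-- ≃ is a congruence w.r.t. choice. -/
theorem obscong_sum_congruence (P Q R : Expr)
    (hP : Closed P) (hQ : Closed Q) (hR : Closed R)
    (hbP : PriFree P) (hbQ : PriFree Q) (hbR : PriFree R)
    (h : ObsCong P Q) :
    ObsCong (.sum P R) (.sum Q R) :=
  obscong_sum_congruence_general P Q R h

end PrioCalc
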